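/- Let $J = (a_1,b_1) \times (a_2,b_2) \subset \mathbb{R}^2$, let $\rho \in C_c^\infty(a_2,b_2)$ with $\int_{a_2}^{b_2} \rho(s)\,ds = 1$, and for $u \colon J \to \mathbb{R}^2$ continuous define $v = \mathcal{R}^J u \colon J \to \mathbb{M}^{2\times 2}$ by $v^i_1(x) = \rho(x_2)\int_{a_1}^{x_1}\big(\int_{a_2}^{b_2} u^i(r,s)\,ds\big)\,dr$ and $v^i_2(x) = \int_{a_2}^{x_2} u^i(x_1,s)\,ds - \int_{a_2}^{x_2}\rho(s)\,ds \cdot \int_{a_2}^{b_2} u^i(x_1,s)\,ds$ for $i = 1,2$. If $u \in C^1(\bar J; \mathbb{R}^2)$, then $v \in C^1(\bar J; \mathbb{M}^{2\times 2})$ and $\operatorname{div} v = u$ in $J$, where $(\operatorname{div} v)^i = \partial_{x_1} v^i_1 + \partial_{x_2} v^i_2$. -/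

import Mathlib

open MeasureTheory intervalIntegral

/-- The simple antidivergence operator `𝓡ᴶ` on the rectangle `J = (a₁,b₁) × (a₂,b₂)`:
`(Rop a₁ a₂ b₂ ρ u) x i k` is the `(i,k)` entry of the matrix field `v = 𝓡ᴶ u` at `x`. -/
noncomputable def Rop (a₁ a₂ b₂ : ℝ) (ρ : ℝ → ℝ) (u : ℝ × ℝ → Fin 2 → ℝ) :
    ℝ × ℝ → Fin 2 → Fin 2 → ℝ := fun x i k =>
  if k = 0 then
    ρ x.2 * ∫ r in a₁..x.1, (∫ s in a₂..b₂, u (r, s) i)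
  else
    (∫ s in a₂..x.2, u (x.1, s) i) - (∫ s in a₂..x.2, ρ s) * ∫ s in a₂..b₂, u (x.1, s) i

open Set

namespace AD3

/-- clamp to `[a,b]` -/
def cl (a b t : ℝ) : ℝ := max a (min b t)

/-- reflect across `a` and `b`, then clamp the input to a safe interval -/
noncomputable def q₁ (a b t : ℝ) : ℝ :=
  min (2*b - cl ((3*a-b)/2) ((3*b-a)/2) t) (max (2*a - cl ((3*a-b)/2) ((3*b-a)/2) t)
    (cl ((3*a-b)/2) ((3*b-a)/2) t))

lemma cl_continuous (a b : ℝ) : Continuous (cl a b) := by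
  unfold cl; fun_prop

lemma cl_mem {a b : ℝ} (h : a ≤ b) (t : ℝ) : cl a b t ∈ Icc a b := by
  unfold cl
  constructor
  · exact le_max_left _ _
  · exact max_le h (min_le_left _ _)

lemma cl_eq {a b t : ℝ} (ht : t ∈ Icc a b) : cl a b t = t := by
  unfold cl
  rw [min_eq_right ht.2, max_eq_right ht.1]

lemma q₁_continuous (a b : ℝ) : Continuous (q₁ a b) := by
  unfold q₁; exact (continuous_const.sub (cl_continuous _ _)).min
    ((continuous_const.sub (cl_continuous _ _)).max (cl_continuous _ _))

lemma q₁_of_mem {a b t : ℝ} (hab : a < b) (ht : t ∈ Icc a b) : q₁ a b t = t := by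
  have h1 : t ∈ Icc ((3*a-b)/2) ((3*b-a)/2) :=
    ⟨by nlinarith [ht.1], by nlinarith [ht.2]⟩
  unfold q₁
  rw [cl_eq h1, max_eq_right (by linarith [ht.1]), min_eq_right (by linarith [ht.2])]

lemma q₁_of_left {a b t : ℝ} (hab : a < b) (hc : (3*a-b)/2 ≤ t) (ht : t ≤ a) :
    q₁ a b t = 2*a - t := by
  have h1 : t ∈ Icc ((3*a-b)/2) ((3*b-a)/2) := ⟨hc, by nlinarith⟩
  unfold q₁
  rw [cl_eq h1, max_eq_left (by linarith), min_eq_right (by nlinarith)]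

lemma q₁_of_right {a b t : ℝ} (hab : a < b) (hb : b ≤ t) (hd : t ≤ (3*b-a)/2) :
    q₁ a b t = 2*b - t := by
  have h1 : t ∈ Icc ((3*a-b)/2) ((3*b-a)/2) := ⟨by nlinarith, hd⟩
  unfold q₁
  rw [cl_eq h1]
  rw [max_eq_right (by linarith), min_eq_left (by linarith)]

lemma q₁_mem {a b : ℝ} (hab : a < b) (t : ℝ) : q₁ a b t ∈ Icc a b := by
  rcases le_total t ((3*a-b)/2) with h | h
  · have : cl ((3*a-b)/2) ((3*b-a)/2) t = (3*a-b)/2 := by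
      unfold cl
      rw [min_eq_right (by linarith), max_eq_left h]
    unfold q₁
    rw [this]
    rw [max_eq_left (by linarith), min_eq_right (by nlinarith)]
    constructor <;> [linarith; nlinarith]
  rcases le_total ((3*b-a)/2) t with h2 | h2
  · have : cl ((3*a-b)/2) ((3*b-a)/2) t = (3*b-a)/2 := by
      unfold cl
      rw [min_eq_left h2, max_eq_right (by linarith)]
    unfold q₁
    rw [this]
    rw [max_eq_right (by linarith), min_eq_left (by linarith)]
    constructor <;> [linarith; nlinarith]
  · rcases le_total t a with h3 | h3
    · rw [q₁_of_left hab h h3]; constructor <;> linarith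
    rcases le_total t b with h4 | h4
    · rw [q₁_of_mem hab ⟨h3, h4⟩]; exact ⟨h3, h4⟩
    · rw [q₁_of_right hab h4 h2]; constructor <;> linarith


/-- the closed rectangle -/
def K (a₁ b₁ a₂ b₂ : ℝ) : Set (ℝ × ℝ) := Icc a₁ b₁ ×ˢ Icc a₂ b₂

/-- the extension of `f` by reflection in `x₁` and clamping in `x₂` -/
noncomputable def w (a₁ b₁ a₂ b₂ : ℝ) (f : ℝ × ℝ → ℝ) (x : ℝ × ℝ) : ℝ :=
  2 * f (cl a₁ b₁ x.1, cl a₂ b₂ x.2) - f (q₁ a₁ b₁ x.1, cl a₂ b₂ x.2)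

/-- the `x₁`-derivative of the extension -/
noncomputable def w₁ (a₁ b₁ a₂ b₂ : ℝ) (f : ℝ × ℝ → ℝ) (x : ℝ × ℝ) : ℝ :=
  fderivWithin ℝ f (K a₁ b₁ a₂ b₂) (q₁ a₁ b₁ x.1, cl a₂ b₂ x.2) (1, 0)

section main

variable {a₁ b₁ a₂ b₂ : ℝ} {f : ℝ × ℝ → ℝ}

lemma uniqueDiffK (hab₁ : a₁ < b₁) (hab₂ : a₂ < b₂) : UniqueDiffOn ℝ (K a₁ b₁ a₂ b₂) :=
  (uniqueDiffOn_Icc hab₁).prod (uniqueDiffOn_Icc hab₂)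

lemma w_eq_on (hab₁ : a₁ < b₁) {x : ℝ × ℝ} (hx : x ∈ K a₁ b₁ a₂ b₂) :
    w a₁ b₁ a₂ b₂ f x = f x := by
  unfold w
  rw [cl_eq hx.1, cl_eq hx.2, q₁_of_mem hab₁ hx.1]
  ring

lemma w_continuous (hab₁ : a₁ < b₁) (hab₂ : a₂ < b₂)
    (hf : ContinuousOn f (K a₁ b₁ a₂ b₂)) : Continuous (w a₁ b₁ a₂ b₂ f) := by
  have h1 : Continuous fun x : ℝ × ℝ => f (cl a₁ b₁ x.1, cl a₂ b₂ x.2) :=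
    hf.comp_continuous (((cl_continuous a₁ b₁).comp continuous_fst).prodMk
      ((cl_continuous a₂ b₂).comp continuous_snd))
      (fun x => ⟨cl_mem hab₁.le _, cl_mem hab₂.le _⟩)
  have h2 : Continuous fun x : ℝ × ℝ => f (q₁ a₁ b₁ x.1, cl a₂ b₂ x.2) :=
    hf.comp_continuous (((q₁_continuous a₁ b₁).comp continuous_fst).prodMk
      ((cl_continuous a₂ b₂).comp continuous_snd))
      (fun x => ⟨q₁_mem hab₁ _, cl_mem hab₂.le _⟩)
  exact (continuous_const.mul h1).sub h2

lemma w₁_continuous (hab₁ : a₁ < b₁) (hab₂ : a₂ < b₂)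
    (hf : ContDiffOn ℝ 1 f (K a₁ b₁ a₂ b₂)) : Continuous (w₁ a₁ b₁ a₂ b₂ f) := by
  have hD : ContinuousOn (fderivWithin ℝ f (K a₁ b₁ a₂ b₂)) (K a₁ b₁ a₂ b₂) :=
    hf.continuousOn_fderivWithin (uniqueDiffK hab₁ hab₂) le_rfl
  have h1 : Continuous fun x : ℝ × ℝ =>
      fderivWithin ℝ f (K a₁ b₁ a₂ b₂) (q₁ a₁ b₁ x.1, cl a₂ b₂ x.2) :=
    hD.comp_continuous (((q₁_continuous a₁ b₁).comp continuous_fst).prodMk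
      ((cl_continuous a₂ b₂).comp continuous_snd))
      (fun x => ⟨q₁_mem hab₁ _, cl_mem hab₂.le _⟩)
  exact (ContinuousLinearMap.apply ℝ ℝ ((1:ℝ),(0:ℝ))).continuous.comp h1

/-- one-dimensional sections of `f` are differentiable within `[a₁,b₁]` -/
lemma sec_hasDerivWithinAt (hab₁ : a₁ < b₁) (hab₂ : a₂ < b₂)
    (hf : ContDiffOn ℝ 1 f (K a₁ b₁ a₂ b₂)) {z : ℝ} (hz : z ∈ Icc a₂ b₂)
    {r : ℝ} (hr : r ∈ Icc a₁ b₁) :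
    HasDerivWithinAt (fun t => f (t, z))
      (fderivWithin ℝ f (K a₁ b₁ a₂ b₂) (r, z) (1, 0)) (Icc a₁ b₁) r := by
  have h1 : HasFDerivWithinAt f (fderivWithin ℝ f (K a₁ b₁ a₂ b₂) (r, z))
      (K a₁ b₁ a₂ b₂) (r, z) :=
    (hf.differentiableOn one_ne_zero _ ⟨hr, hz⟩).hasFDerivWithinAt
  have h2 : HasDerivWithinAt (fun t : ℝ => (t, z)) ((1:ℝ), (0:ℝ)) (Icc a₁ b₁) r :=
    ((hasDerivAt_id r).prodMk (hasDerivAt_const r z)).hasDerivWithinAt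
  exact h1.comp_hasDerivWithinAt r h2 (fun t ht => (⟨ht, hz⟩ : (t, z) ∈ K a₁ b₁ a₂ b₂))

/-- same, within `Ici a₁` at `a₁` -/
lemma sec_hasDerivWithinAt_Ici (hab₁ : a₁ < b₁) (hab₂ : a₂ < b₂)
    (hf : ContDiffOn ℝ 1 f (K a₁ b₁ a₂ b₂)) {z : ℝ} (hz : z ∈ Icc a₂ b₂) :
    HasDerivWithinAt (fun t => f (t, z))
      (fderivWithin ℝ f (K a₁ b₁ a₂ b₂) (a₁, z) (1, 0)) (Ici a₁) a₁ := by
  have := sec_hasDerivWithinAt hab₁ hab₂ hf hz (left_mem_Icc.2 hab₁.le)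
  rw [← Ici_inter_Iic] at this
  exact (hasDerivWithinAt_inter (Iic_mem_nhds hab₁)).mp this

/-- same, within `Iic b₁` at `b₁` -/
lemma sec_hasDerivWithinAt_Iic (hab₁ : a₁ < b₁) (hab₂ : a₂ < b₂)
    (hf : ContDiffOn ℝ 1 f (K a₁ b₁ a₂ b₂)) {z : ℝ} (hz : z ∈ Icc a₂ b₂) :
    HasDerivWithinAt (fun t => f (t, z))
      (fderivWithin ℝ f (K a₁ b₁ a₂ b₂) (b₁, z) (1, 0)) (Iic b₁) b₁ := by
  have := sec_hasDerivWithinAt hab₁ hab₂ hf hz (right_mem_Icc.2 hab₁.le)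
  rw [← Ici_inter_Iic, Set.inter_comm] at this
  exact (hasDerivWithinAt_inter (Ici_mem_nhds hab₁)).mp this

/-- same, full derivative at interior points -/
lemma sec_hasDerivAt (hab₁ : a₁ < b₁) (hab₂ : a₂ < b₂)
    (hf : ContDiffOn ℝ 1 f (K a₁ b₁ a₂ b₂)) {z : ℝ} (hz : z ∈ Icc a₂ b₂)
    {r : ℝ} (hr : r ∈ Ioo a₁ b₁) :
    HasDerivAt (fun t => f (t, z))
      (fderivWithin ℝ f (K a₁ b₁ a₂ b₂) (r, z) (1, 0)) r :=
  (sec_hasDerivWithinAt hab₁ hab₂ hf hz (Ioo_subset_Icc_self hr)).hasDerivAt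
    (Icc_mem_nhds hr.1 hr.2)


lemma cl_of_le {a b t : ℝ} (hab : a ≤ b) (ht : t ≤ a) : cl a b t = a := by
  unfold cl; rw [min_eq_right (ht.trans hab), max_eq_left ht]

lemma cl_of_ge {a b t : ℝ} (hab : a ≤ b) (ht : b ≤ t) : cl a b t = b := by
  unfold cl; rw [min_eq_left ht, max_eq_right hab]

lemma w_eq_sec (hab₁ : a₁ < b₁) {s y₂ : ℝ} (hs : s ∈ Icc a₁ b₁) :
    w a₁ b₁ a₂ b₂ f (s, y₂) = f (s, cl a₂ b₂ y₂) := by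
  unfold w
  simp only
  rw [cl_eq hs, q₁_of_mem hab₁ hs]
  ring

/-- The core lemma: the extension has `x₁`-derivative `w₁` on the open strip. -/
lemma hW (hab₁ : a₁ < b₁) (hab₂ : a₂ < b₂)
    (hf : ContDiffOn ℝ 1 f (K a₁ b₁ a₂ b₂)) (y₂ : ℝ) {t : ℝ}
    (ht : t ∈ Ioo ((3*a₁-b₁)/2) ((3*b₁-a₁)/2)) :
    HasDerivAt (fun t => w a₁ b₁ a₂ b₂ f (t, y₂)) (w₁ a₁ b₁ a₂ b₂ f (t, y₂)) t := by
  set z := cl a₂ b₂ y₂ with hzdef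
  have hz : z ∈ Icc a₂ b₂ := cl_mem hab₂.le y₂
  set D := fderivWithin ℝ f (K a₁ b₁ a₂ b₂) with hDdef
  obtain ⟨htc, htd⟩ := ht
  rcases lt_trichotomy t a₁ with hlt | heq | hgt
  · -- left reflection zone
    have hpt : 2*a₁ - t ∈ Ioo a₁ b₁ := ⟨by linarith, by linarith⟩
    have hinner : HasDerivAt (fun r => f (r, z)) (D (2*a₁ - t, z) (1, 0)) (2*a₁ - t) :=
      sec_hasDerivAt hab₁ hab₂ hf hz hpt
    have houter : HasDerivAt (fun s : ℝ => 2*a₁ - s) (-1) t := by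
      simpa using (hasDerivAt_id t).const_sub (2*a₁)
    have hcomp : HasDerivAt (fun s => f (2*a₁ - s, z)) (D (2*a₁ - t, z) (1, 0) * (-1)) t :=
      HasDerivAt.comp t hinner houter
    have hkey : HasDerivAt (fun s => 2 * f (a₁, z) - f (2*a₁ - s, z))
        (D (2*a₁ - t, z) (1, 0)) t := by
      have := (hasDerivAt_const t (2 * f (a₁, z))).fun_sub hcomp
      exact this.congr_deriv (by ring)
    have hev : (fun s => w a₁ b₁ a₂ b₂ f (s, y₂)) =ᶠ[nhds t]
        (fun s => 2 * f (a₁, z) - f (2*a₁ - s, z)) := by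
      filter_upwards [Ioo_mem_nhds htc hlt] with s hs
      unfold w
      simp only
      rw [← hzdef, cl_of_le hab₁.le hs.2.le, q₁_of_left hab₁ hs.1.le hs.2.le]
    have : w₁ a₁ b₁ a₂ b₂ f (t, y₂) = D (2*a₁ - t, z) (1, 0) := by
      unfold w₁
      rw [← hzdef, ← hDdef, q₁_of_left hab₁ htc.le hlt.le]
    rw [this]
    exact hkey.congr_of_eventuallyEq hev
  · -- left seam
    rw [heq] at htc htd ⊢
    have hval : w₁ a₁ b₁ a₂ b₂ f (a₁, y₂) = D (a₁, z) (1, 0) := by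
      unfold w₁
      rw [← hzdef, ← hDdef, q₁_of_mem hab₁ (left_mem_Icc.2 hab₁.le)]
    rw [hval]
    have baseIci : HasDerivWithinAt (fun r => f (r, z)) (D (a₁, z) (1, 0)) (Ici a₁) a₁ :=
      sec_hasDerivWithinAt_Ici hab₁ hab₂ hf hz
    have hleft : HasDerivWithinAt (fun s => w a₁ b₁ a₂ b₂ f (s, y₂))
        (D (a₁, z) (1, 0)) (Iic a₁) a₁ := by
      have σ : HasDerivWithinAt (fun s : ℝ => 2*a₁ - s) (-1) (Iic a₁) a₁ := by
        simpa using ((hasDerivAt_id a₁).const_sub (2*a₁)).hasDerivWithinAt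
      have comp : HasDerivWithinAt ((fun r => f (r, z)) ∘ (fun s : ℝ => 2*a₁ - s))
          (D (a₁, z) (1, 0) * (-1)) (Iic a₁) a₁ := by
        have maps : MapsTo (fun s : ℝ => 2*a₁ - s) (Iic a₁) (Ici a₁) := by
          intro s hs
          simp only [mem_Iic] at hs
          simp only [Set.mem_Ici]
          linarith
        exact baseIci.comp_of_eq a₁ σ maps (by ring)
      have hkey : HasDerivWithinAt (fun s => 2 * f (a₁, z) - f (2*a₁ - s, z))
          (D (a₁, z) (1, 0)) (Iic a₁) a₁ := by
        have := (hasDerivWithinAt_const a₁ (Iic a₁) (2 * f (a₁, z))).fun_sub comp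
        exact this.congr_deriv (by ring)
      have hpt0 : w a₁ b₁ a₂ b₂ f (a₁, y₂) = 2 * f (a₁, z) - f (2*a₁ - a₁, z) := by
        rw [w_eq_sec hab₁ (left_mem_Icc.2 hab₁.le), ← hzdef,
          show 2*a₁ - a₁ = a₁ by ring]
        ring
      apply hkey.congr_of_eventuallyEq ?_ hpt0
      filter_upwards [self_mem_nhdsWithin,
        mem_nhdsWithin_of_mem_nhds (Ioi_mem_nhds htc)] with s hs1 hs2
      unfold w
      simp only
      rw [← hzdef, cl_of_le hab₁.le hs1, q₁_of_left hab₁ (le_of_lt hs2) hs1]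
    have hright : HasDerivWithinAt (fun s => w a₁ b₁ a₂ b₂ f (s, y₂))
        (D (a₁, z) (1, 0)) (Ici a₁) a₁ := by
      apply baseIci.congr_of_eventuallyEq ?_
        (w_eq_sec hab₁ (left_mem_Icc.2 hab₁.le))
      filter_upwards [self_mem_nhdsWithin,
        mem_nhdsWithin_of_mem_nhds (Iio_mem_nhds hab₁)] with s hs1 hs2
      exact w_eq_sec hab₁ ⟨hs1, hs2.le⟩
    have huni := hleft.union hright
    rw [Iic_union_Ici] at huni
    exact hasDerivWithinAt_univ.mp huni
  rcases lt_trichotomy t b₁ with hlt | heq | hgt2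
  · -- interior
    have hval : w₁ a₁ b₁ a₂ b₂ f (t, y₂) = D (t, z) (1, 0) := by
      unfold w₁
      rw [← hzdef, ← hDdef, q₁_of_mem hab₁ ⟨hgt.le, hlt.le⟩]
    rw [hval]
    apply (sec_hasDerivAt hab₁ hab₂ hf hz ⟨hgt, hlt⟩).congr_of_eventuallyEq
    filter_upwards [Ioo_mem_nhds hgt hlt] with s hs
    exact w_eq_sec hab₁ ⟨hs.1.le, hs.2.le⟩
  · -- right seam
    rw [heq] at htc htd ⊢
    have hval : w₁ a₁ b₁ a₂ b₂ f (b₁, y₂) = D (b₁, z) (1, 0) := by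
      unfold w₁
      rw [← hzdef, ← hDdef, q₁_of_mem hab₁ (right_mem_Icc.2 hab₁.le)]
    rw [hval]
    have baseIic : HasDerivWithinAt (fun r => f (r, z)) (D (b₁, z) (1, 0)) (Iic b₁) b₁ :=
      sec_hasDerivWithinAt_Iic hab₁ hab₂ hf hz
    have hleft : HasDerivWithinAt (fun s => w a₁ b₁ a₂ b₂ f (s, y₂))
        (D (b₁, z) (1, 0)) (Iic b₁) b₁ := by
      apply baseIic.congr_of_eventuallyEq ?_
        (w_eq_sec hab₁ (right_mem_Icc.2 hab₁.le))
      filter_upwards [self_mem_nhdsWithin,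
        mem_nhdsWithin_of_mem_nhds (Ioi_mem_nhds hab₁)] with s hs1 hs2
      exact w_eq_sec hab₁ ⟨hs2.le, hs1⟩
    have hright : HasDerivWithinAt (fun s => w a₁ b₁ a₂ b₂ f (s, y₂))
        (D (b₁, z) (1, 0)) (Ici b₁) b₁ := by
      have σ : HasDerivWithinAt (fun s : ℝ => 2*b₁ - s) (-1) (Ici b₁) b₁ := by
        simpa using ((hasDerivAt_id b₁).const_sub (2*b₁)).hasDerivWithinAt
      have comp : HasDerivWithinAt ((fun r => f (r, z)) ∘ (fun s : ℝ => 2*b₁ - s))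
          (D (b₁, z) (1, 0) * (-1)) (Ici b₁) b₁ := by
        have maps : MapsTo (fun s : ℝ => 2*b₁ - s) (Ici b₁) (Iic b₁) := by
          intro s hs
          simp only [mem_Ici] at hs
          simp only [Set.mem_Iic]
          linarith
        exact baseIic.comp_of_eq b₁ σ maps (by ring)
      have hkey : HasDerivWithinAt (fun s => 2 * f (b₁, z) - f (2*b₁ - s, z))
          (D (b₁, z) (1, 0)) (Ici b₁) b₁ := by
        have := (hasDerivWithinAt_const b₁ (Ici b₁) (2 * f (b₁, z))).fun_sub comp
        exact this.congr_deriv (by ring)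
      have hpt0 : w a₁ b₁ a₂ b₂ f (b₁, y₂) = 2 * f (b₁, z) - f (2*b₁ - b₁, z) := by
        rw [w_eq_sec hab₁ (right_mem_Icc.2 hab₁.le), ← hzdef,
          show 2*b₁ - b₁ = b₁ by ring]
        ring
      apply hkey.congr_of_eventuallyEq ?_ hpt0
      filter_upwards [self_mem_nhdsWithin,
        mem_nhdsWithin_of_mem_nhds (Iio_mem_nhds htd)] with s hs1 hs2
      unfold w
      simp only
      rw [← hzdef, cl_of_ge hab₁.le hs1, q₁_of_right hab₁ hs1 (le_of_lt hs2)]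
    have huni := hleft.union hright
    rw [Iic_union_Ici] at huni
    exact hasDerivWithinAt_univ.mp huni
  · -- right reflection zone
    have hpt : 2*b₁ - t ∈ Ioo a₁ b₁ := ⟨by linarith, by linarith⟩
    have hinner : HasDerivAt (fun r => f (r, z)) (D (2*b₁ - t, z) (1, 0)) (2*b₁ - t) :=
      sec_hasDerivAt hab₁ hab₂ hf hz hpt
    have houter : HasDerivAt (fun s : ℝ => 2*b₁ - s) (-1) t := by
      simpa using (hasDerivAt_id t).const_sub (2*b₁)
    have hcomp : HasDerivAt (fun s => f (2*b₁ - s, z)) (D (2*b₁ - t, z) (1, 0) * (-1)) t :=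
      HasDerivAt.comp t hinner houter
    have hkey : HasDerivAt (fun s => 2 * f (b₁, z) - f (2*b₁ - s, z))
        (D (2*b₁ - t, z) (1, 0)) t := by
      have := (hasDerivAt_const t (2 * f (b₁, z))).fun_sub hcomp
      exact this.congr_deriv (by ring)
    have hev : (fun s => w a₁ b₁ a₂ b₂ f (s, y₂)) =ᶠ[nhds t]
        (fun s => 2 * f (b₁, z) - f (2*b₁ - s, z)) := by
      filter_upwards [Ioo_mem_nhds hgt2 htd] with s hs
      unfold w
      simp only
      rw [← hzdef, cl_of_ge hab₁.le hs.1.le, q₁_of_right hab₁ hs.1.le hs.2.le]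
    have : w₁ a₁ b₁ a₂ b₂ f (t, y₂) = D (2*b₁ - t, z) (1, 0) := by
      unfold w₁
      rw [← hzdef, ← hDdef, q₁_of_right hab₁ hgt2.le htd.le]
    rw [this]
    exact hkey.congr_of_eventuallyEq hev

end main

section parts

variable {a₁ b₁ a₂ b₂ : ℝ} {f : ℝ × ℝ → ℝ}

lemma w_sec_cont (hab₁ : a₁ < b₁) (hab₂ : a₂ < b₂)
    (hf : ContDiffOn ℝ 1 f (K a₁ b₁ a₂ b₂)) (x : ℝ) :
    Continuous fun s => w a₁ b₁ a₂ b₂ f (x, s) :=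
  (w_continuous hab₁ hab₂ (hf.continuousOn)).comp (continuous_const.prodMk continuous_id)

/-- derivative of a parametric integral with fixed endpoints -/
lemma pd (hab₁ : a₁ < b₁) (hab₂ : a₂ < b₂)
    (hf : ContDiffOn ℝ 1 f (K a₁ b₁ a₂ b₂)) (c : ℝ) {r : ℝ}
    (hr : r ∈ Ioo ((3*a₁-b₁)/2) ((3*b₁-a₁)/2)) :
    HasDerivAt (fun x => ∫ s in a₂..c, w a₁ b₁ a₂ b₂ f (x, s))
      (∫ s in a₂..c, w₁ a₁ b₁ a₂ b₂ f (r, s)) r := by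
  obtain ⟨ε, εpos, hball⟩ : ∃ ε > 0, Metric.ball r ε ⊆ Ioo ((3*a₁-b₁)/2) ((3*b₁-a₁)/2) :=
    Metric.isOpen_iff.mp isOpen_Ioo r hr
  have hw₁c := w₁_continuous hab₁ hab₂ hf
  have hcomp : IsCompact (Icc (r - ε) (r + ε) ×ˢ uIcc a₂ c) :=
    isCompact_Icc.prod isCompact_uIcc
  obtain ⟨C, hC⟩ := hcomp.exists_bound_of_continuousOn hw₁c.continuousOn
  have hw₁sec : Continuous fun s => w₁ a₁ b₁ a₂ b₂ f (r, s) :=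
    hw₁c.comp (continuous_const.prodMk continuous_id)
  refine (intervalIntegral.hasDerivAt_integral_of_dominated_loc_of_deriv_le (μ := volume)
    (F := fun x s => w a₁ b₁ a₂ b₂ f (x, s))
    (F' := fun x s => w₁ a₁ b₁ a₂ b₂ f (x, s))
    (bound := fun _ => C) (Metric.ball_mem_nhds r εpos)
    (Filter.Eventually.of_forall fun x =>
      (w_sec_cont hab₁ hab₂ hf x).aestronglyMeasurable)
    ((w_sec_cont hab₁ hab₂ hf r).intervalIntegrable a₂ c)
    hw₁sec.aestronglyMeasurable
    ?_ intervalIntegrable_const ?_).2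
  · refine Filter.Eventually.of_forall fun s hs x hx => ?_
    refine hC (x, s) ⟨?_, uIoc_subset_uIcc hs⟩
    have := Metric.mem_ball.mp hx
    rw [Real.dist_eq] at this
    constructor <;> [linarith [abs_lt.mp this]; linarith [(abs_lt.mp this).2]]
  · refine Filter.Eventually.of_forall fun s _ x hx => ?_
    exact hW hab₁ hab₂ hf s (hball hx)

end parts

section assembly

variable {a₁ b₁ a₂ b₂ : ℝ} {f : ℝ × ℝ → ℝ} {ρ : ℝ → ℝ}

/-- joint derivative of the parametric primitive `H` -/
lemma hH (hab₁ : a₁ < b₁) (hab₂ : a₂ < b₂)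
    (hf : ContDiffOn ℝ 1 f (K a₁ b₁ a₂ b₂)) {y : ℝ × ℝ}
    (hy : y.1 ∈ Ioo ((3*a₁-b₁)/2) ((3*b₁-a₁)/2)) :
    HasFDerivAt (fun p : ℝ × ℝ => ∫ s in a₂..p.2, w a₁ b₁ a₂ b₂ f (p.1, s))
      ((∫ s in a₂..y.2, w₁ a₁ b₁ a₂ b₂ f (y.1, s)) • ContinuousLinearMap.fst ℝ ℝ ℝ
        + (w a₁ b₁ a₂ b₂ f y) • ContinuousLinearMap.snd ℝ ℝ ℝ) y := by
  have hwc := w_continuous hab₁ hab₂ hf.continuousOn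
  have hint : ∀ (x c d : ℝ), IntervalIntegrable (fun s => w a₁ b₁ a₂ b₂ f (x, s)) volume c d :=
    fun x c d => (w_sec_cont hab₁ hab₂ hf x).intervalIntegrable c d
  have hA : HasFDerivAt (fun p : ℝ × ℝ => ∫ s in a₂..y.2, w a₁ b₁ a₂ b₂ f (p.1, s))
      ((∫ s in a₂..y.2, w₁ a₁ b₁ a₂ b₂ f (y.1, s)) • ContinuousLinearMap.fst ℝ ℝ ℝ) y :=
    (pd hab₁ hab₂ hf y.2 hy).comp_hasFDerivAt y hasFDerivAt_fst
  have hB : HasFDerivAt (fun p : ℝ × ℝ => ∫ s in y.2..p.2, w a₁ b₁ a₂ b₂ f (p.1, s))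
      ((w a₁ b₁ a₂ b₂ f y) • ContinuousLinearMap.snd ℝ ℝ ℝ) y := by
    rw [hasFDerivAt_iff_isLittleO_nhds_zero]
    rw [Asymptotics.isLittleO_iff]
    intro c hc
    obtain ⟨δ, δpos, hδ⟩ := Metric.continuousAt_iff.mp hwc.continuousAt c hc
    filter_upwards [Metric.ball_mem_nhds (0 : ℝ × ℝ) δpos] with h hh
    have hh' : ‖h‖ < δ := by simpa [Metric.mem_ball] using hh
    have key : (∫ s in y.2..(y.2 + h.2), w a₁ b₁ a₂ b₂ f (y.1 + h.1, s))
        - w a₁ b₁ a₂ b₂ f y * h.2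
        = ∫ s in y.2..(y.2 + h.2), (w a₁ b₁ a₂ b₂ f (y.1 + h.1, s) - w a₁ b₁ a₂ b₂ f y) := by
      rw [intervalIntegral.integral_sub (hint _ _ _) intervalIntegrable_const,
        intervalIntegral.integral_const]
      simp
      ring
    have hbnd : ∀ s ∈ Set.uIoc y.2 (y.2 + h.2),
        ‖w a₁ b₁ a₂ b₂ f (y.1 + h.1, s) - w a₁ b₁ a₂ b₂ f y‖ ≤ c := by
      intro s hs
      have hs1 : min y.2 (y.2 + h.2) < s := hs.1
      have hs2 : s ≤ max y.2 (y.2 + h.2) := hs.2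
      have habs : |s - y.2| ≤ |h.2| := by
        rcases le_total y.2 (y.2 + h.2) with h' | h'
        · rw [min_eq_left h'] at hs1; rw [max_eq_right h'] at hs2
          rw [abs_of_nonneg (by linarith), abs_of_nonneg (by linarith)]
          linarith
        · rw [min_eq_right h'] at hs1; rw [max_eq_left h'] at hs2
          rw [abs_of_nonpos (by linarith), abs_of_nonpos (by linarith)]
          linarith
      have hdist : dist (y.1 + h.1, s) y < δ := by
        rw [Prod.dist_eq]
        have h1 : dist (y.1 + h.1) y.1 ≤ ‖h‖ := by
          rw [Real.dist_eq]
          simpa [abs_sub_comm] using (abs_le.mpr ⟨neg_abs_le h.1, le_abs_self h.1⟩).trans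
            (norm_fst_le h)
        have h2 : dist s y.2 ≤ ‖h‖ := by
          rw [Real.dist_eq]
          exact habs.trans (norm_snd_le h)
        exact max_lt (h1.trans_lt hh') (h2.trans_lt hh')
      have := hδ hdist
      rw [dist_eq_norm] at this
      exact this.le
    calc ‖(∫ s in y.2..(y.2 + h.2), w a₁ b₁ a₂ b₂ f ((y + h).1, s))
          - (∫ s in y.2..y.2, w a₁ b₁ a₂ b₂ f (y.1, s))
          - ((w a₁ b₁ a₂ b₂ f y) • ContinuousLinearMap.snd ℝ ℝ ℝ) h‖
        = ‖∫ s in y.2..(y.2 + h.2), (w a₁ b₁ a₂ b₂ f (y.1 + h.1, s) - w a₁ b₁ a₂ b₂ f y)‖ := by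
          rw [intervalIntegral.integral_same]
          simp only [Prod.fst_add, Prod.snd_add, ContinuousLinearMap.coe_smul',
            Pi.smul_apply, ContinuousLinearMap.coe_snd', smul_eq_mul, sub_zero]
          rw [← key]
      _ ≤ c * |y.2 + h.2 - y.2| :=
          intervalIntegral.norm_integral_le_of_norm_le_const hbnd
      _ ≤ c * ‖h‖ := by
          have : |y.2 + h.2 - y.2| = |h.2| := by ring_nf
          rw [this]
          exact mul_le_mul_of_nonneg_left (norm_snd_le h) hc.le
  have hdecomp : ∀ p : ℝ × ℝ,
      (∫ s in a₂..y.2, w a₁ b₁ a₂ b₂ f (p.1, s)) + ∫ s in y.2..p.2, w a₁ b₁ a₂ b₂ f (p.1, s)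
        = ∫ s in a₂..p.2, w a₁ b₁ a₂ b₂ f (p.1, s) := fun p =>
    intervalIntegral.integral_add_adjacent_intervals (hint _ _ _) (hint _ _ _)
  exact (hA.add hB).congr_of_eventuallyEq
    (Filter.Eventually.of_forall fun p => (hdecomp p).symm)

lemma main (hab₁ : a₁ < b₁) (hab₂ : a₂ < b₂) (hρ : ContDiff ℝ 1 ρ)
    (hf : ContDiffOn ℝ 1 f (K a₁ b₁ a₂ b₂)) :
    ContDiffOn ℝ 1 (fun x : ℝ × ℝ => ρ x.2 * ∫ r in a₁..x.1, (∫ s in a₂..b₂, f (r, s)))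
      (K a₁ b₁ a₂ b₂) ∧
    ContDiffOn ℝ 1 (fun x : ℝ × ℝ => (∫ s in a₂..x.2, f (x.1, s))
      - (∫ s in a₂..x.2, ρ s) * ∫ s in a₂..b₂, f (x.1, s)) (K a₁ b₁ a₂ b₂) ∧
    ∀ x ∈ Ioo a₁ b₁ ×ˢ Ioo a₂ b₂,
      fderiv ℝ (fun y : ℝ × ℝ => ρ y.2 * ∫ r in a₁..y.1, (∫ s in a₂..b₂, f (r, s))) x (1, 0) +
      fderiv ℝ (fun y : ℝ × ℝ => (∫ s in a₂..y.2, f (y.1, s))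
        - (∫ s in a₂..y.2, ρ s) * ∫ s in a₂..b₂, f (y.1, s)) x (0, 1) = f x := by
  have hwc := w_continuous hab₁ hab₂ hf.continuousOn
  have hw₁c := w₁_continuous hab₁ hab₂ hf
  have hIcc : Icc a₁ b₁ ⊆ Ioo ((3*a₁-b₁)/2) ((3*b₁-a₁)/2) := by
    intro t ht
    exact ⟨by linarith [ht.1], by linarith [ht.2]⟩
  -- g and friends
  have hgc : Continuous (fun x : ℝ => ∫ s in a₂..b₂, w a₁ b₁ a₂ b₂ f (x, s)) :=
    intervalIntegral.continuous_parametric_intervalIntegral_of_continuous'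
      (f := fun x s => w a₁ b₁ a₂ b₂ f (x, s)) (by exact hwc) a₂ b₂
  have hg₁c : Continuous (fun x : ℝ => ∫ s in a₂..b₂, w₁ a₁ b₁ a₂ b₂ f (x, s)) :=
    intervalIntegral.continuous_parametric_intervalIntegral_of_continuous'
      (f := fun x s => w₁ a₁ b₁ a₂ b₂ f (x, s)) (by exact hw₁c) a₂ b₂
  have hgd : ∀ r ∈ Ioo ((3*a₁-b₁)/2) ((3*b₁-a₁)/2),
      HasDerivAt (fun x : ℝ => ∫ s in a₂..b₂, w a₁ b₁ a₂ b₂ f (x, s))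
        (∫ s in a₂..b₂, w₁ a₁ b₁ a₂ b₂ f (r, s)) r := fun r hr => pd hab₁ hab₂ hf b₂ hr
  have hgC1 : ContDiffOn ℝ 1 (fun x : ℝ => ∫ s in a₂..b₂, w a₁ b₁ a₂ b₂ f (x, s))
      (Ioo ((3*a₁-b₁)/2) ((3*b₁-a₁)/2)) := by
    have h := (contDiffOn_succ_iff_deriv_of_isOpen
        (isOpen_Ioo (a := (3*a₁-b₁)/2) (b := (3*b₁-a₁)/2)) (n := 0)).2
      ⟨fun r hr => (hgd r hr).differentiableAt.differentiableWithinAt,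
        by simp,
        contDiffOn_zero.2 (hg₁c.continuousOn.congr (fun r hr => (hgd r hr).deriv))⟩
    simpa using h
  -- H and friends
  have hHdc : Continuous (fun p : ℝ × ℝ => ∫ s in a₂..p.2, w₁ a₁ b₁ a₂ b₂ f (p.1, s)) :=
    intervalIntegral.continuous_parametric_primitive_of_continuous
      (f := fun x s => w₁ a₁ b₁ a₂ b₂ f (x, s)) (by exact hw₁c)
  have hO : IsOpen ((Ioo ((3*a₁-b₁)/2) ((3*b₁-a₁)/2)) ×ˢ (univ : Set ℝ)) :=
    isOpen_Ioo.prod isOpen_univ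
  have hHC1 : ContDiffOn ℝ 1 (fun p : ℝ × ℝ => ∫ s in a₂..p.2, w a₁ b₁ a₂ b₂ f (p.1, s))
      ((Ioo ((3*a₁-b₁)/2) ((3*b₁-a₁)/2)) ×ˢ (univ : Set ℝ)) := by
    have h := (contDiffOn_succ_iff_fderiv_of_isOpen hO (n := 0)).2
      ⟨fun p hp => (hH hab₁ hab₂ hf hp.1).differentiableAt.differentiableWithinAt,
        by simp,
        contDiffOn_zero.2 (((hHdc.smul continuous_const).add
          (hwc.smul continuous_const)).continuousOn.congr
          (fun p hp => (hH hab₁ hab₂ hf hp.1).fderiv))⟩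
    simpa using h
  -- P
  have hPd : ∀ t : ℝ, HasDerivAt (fun t => ∫ s in a₂..t, ρ s) (ρ t) t := fun t =>
    intervalIntegral.integral_hasDerivAt_right (hρ.continuous.intervalIntegrable a₂ t)
      (hρ.continuous.stronglyMeasurableAtFilter volume (nhds t)) hρ.continuous.continuousAt
  have hPC1 : ContDiff ℝ 1 (fun t : ℝ => ∫ s in a₂..t, ρ s) :=
    contDiff_one_iff_deriv.2 ⟨fun t => (hPd t).differentiableAt,
      hρ.continuous.congr fun t => ((hPd t).deriv).symm⟩
  -- F
  have hFd : ∀ x : ℝ, HasDerivAt (fun x : ℝ => ∫ r in a₁..x, ∫ s in a₂..b₂, w a₁ b₁ a₂ b₂ f (r, s))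
      (∫ s in a₂..b₂, w a₁ b₁ a₂ b₂ f (x, s)) x := fun x =>
    intervalIntegral.integral_hasDerivAt_right (hgc.intervalIntegrable a₁ x)
      (hgc.stronglyMeasurableAtFilter volume (nhds x)) hgc.continuousAt
  have hFC1 : ContDiff ℝ 1 (fun x : ℝ => ∫ r in a₁..x, ∫ s in a₂..b₂, w a₁ b₁ a₂ b₂ f (r, s)) :=
    contDiff_one_iff_deriv.2 ⟨fun x => (hFd x).differentiableAt,
      hgc.congr fun x => ((hFd x).deriv).symm⟩
  -- V₀ and V₁
  have hV₀C1 : ContDiff ℝ 1 (fun p : ℝ × ℝ =>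
      ρ p.2 * ∫ r in a₁..p.1, ∫ s in a₂..b₂, w a₁ b₁ a₂ b₂ f (r, s)) :=
    (hρ.comp contDiff_snd).mul (hFC1.comp contDiff_fst)
  have hKO : K a₁ b₁ a₂ b₂ ⊆ (Ioo ((3*a₁-b₁)/2) ((3*b₁-a₁)/2)) ×ˢ (univ : Set ℝ) :=
    fun p hp => ⟨hIcc hp.1, trivial⟩
  have hV₁C1 : ContDiffOn ℝ 1 (fun p : ℝ × ℝ =>
      (∫ s in a₂..p.2, w a₁ b₁ a₂ b₂ f (p.1, s))
        - (∫ s in a₂..p.2, ρ s) * ∫ s in a₂..b₂, w a₁ b₁ a₂ b₂ f (p.1, s))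
      ((Ioo ((3*a₁-b₁)/2) ((3*b₁-a₁)/2)) ×ˢ (univ : Set ℝ)) := by
    apply hHC1.sub
    apply ContDiffOn.mul
    · exact ((hPC1.comp contDiff_snd).contDiffOn)
    · exact hgC1.comp contDiff_fst.contDiffOn (fun p hp => hp.1)
  -- equality of the original integrands with the extension versions on K
  have hEq0 : ∀ x ∈ K a₁ b₁ a₂ b₂,
      (fun x : ℝ × ℝ => ρ x.2 * ∫ r in a₁..x.1, (∫ s in a₂..b₂, f (r, s))) x
        = ρ x.2 * ∫ r in a₁..x.1, ∫ s in a₂..b₂, w a₁ b₁ a₂ b₂ f (r, s) := by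
    intro x hx
    simp only
    congr 1
    apply intervalIntegral.integral_congr
    intro r hr
    have hr' : r ∈ Icc a₁ b₁ := uIcc_subset_Icc (left_mem_Icc.2 hab₁.le) hx.1 hr
    apply intervalIntegral.integral_congr
    intro s hs
    have hs' : s ∈ Icc a₂ b₂ := by
      rw [uIcc_of_le hab₂.le] at hs
      exact hs
    exact (w_eq_on hab₁ (show ((r : ℝ), s) ∈ K a₁ b₁ a₂ b₂ from ⟨hr', hs'⟩)).symm
  have hgEq : ∀ r ∈ Icc a₁ b₁,
      (∫ s in a₂..b₂, f (r, s)) = ∫ s in a₂..b₂, w a₁ b₁ a₂ b₂ f (r, s) := by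
    intro r hr
    apply intervalIntegral.integral_congr
    intro s hs
    have hs' : s ∈ Icc a₂ b₂ := by rw [uIcc_of_le hab₂.le] at hs; exact hs
    exact (w_eq_on hab₁ (show ((r : ℝ), s) ∈ K a₁ b₁ a₂ b₂ from ⟨hr, hs'⟩)).symm
  have hEq1 : ∀ x ∈ K a₁ b₁ a₂ b₂,
      (fun x : ℝ × ℝ => (∫ s in a₂..x.2, f (x.1, s))
        - (∫ s in a₂..x.2, ρ s) * ∫ s in a₂..b₂, f (x.1, s)) x
      = (∫ s in a₂..x.2, w a₁ b₁ a₂ b₂ f (x.1, s))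
        - (∫ s in a₂..x.2, ρ s) * ∫ s in a₂..b₂, w a₁ b₁ a₂ b₂ f (x.1, s) := by
    intro x hx
    simp only
    rw [hgEq x.1 hx.1]
    congr 1
    apply intervalIntegral.integral_congr
    intro s hs
    have hs' : s ∈ Icc a₂ b₂ := uIcc_subset_Icc (left_mem_Icc.2 hab₂.le) hx.2 hs
    exact (w_eq_on hab₁ (show ((x.1 : ℝ), s) ∈ K a₁ b₁ a₂ b₂ from ⟨hx.1, hs'⟩)).symm
  refine ⟨hV₀C1.contDiffOn.congr hEq0, (hV₁C1.mono hKO).congr hEq1, ?_⟩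
  -- the divergence identity
  intro x hx
  have hxK : x ∈ K a₁ b₁ a₂ b₂ := ⟨Ioo_subset_Icc_self hx.1, Ioo_subset_Icc_self hx.2⟩
  have hnb : Ioo a₁ b₁ ×ˢ Ioo a₂ b₂ ∈ nhds x := (isOpen_Ioo.prod isOpen_Ioo).mem_nhds hx
  have hmemK : ∀ p ∈ Ioo a₁ b₁ ×ˢ Ioo a₂ b₂, p ∈ K a₁ b₁ a₂ b₂ := fun p hp =>
    ⟨Ioo_subset_Icc_self hp.1, Ioo_subset_Icc_self hp.2⟩
  have hev0 := Filter.eventuallyEq_of_mem hnb (fun p hp => hEq0 p (hmemK p hp))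
  have hev1 := Filter.eventuallyEq_of_mem hnb (fun p hp => hEq1 p (hmemK p hp))
  rw [hev0.fderiv_eq, hev1.fderiv_eq]
  have hx1 : x.1 ∈ Ioo ((3*a₁-b₁)/2) ((3*b₁-a₁)/2) := hIcc (Ioo_subset_Icc_self hx.1)
  -- derivative of the first component
  have h1 : HasFDerivAt (fun p : ℝ × ℝ => ∫ r in a₁..p.1, ∫ s in a₂..b₂, w a₁ b₁ a₂ b₂ f (r, s))
      ((∫ s in a₂..b₂, w a₁ b₁ a₂ b₂ f (x.1, s)) • ContinuousLinearMap.fst ℝ ℝ ℝ) x :=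
    (hFd x.1).comp_hasFDerivAt x hasFDerivAt_fst
  have h2 : HasFDerivAt (fun p : ℝ × ℝ => ρ p.2)
      ((deriv ρ x.2) • ContinuousLinearMap.snd ℝ ℝ ℝ) x :=
    ((hρ.differentiable one_ne_zero) x.2).hasDerivAt.comp_hasFDerivAt x hasFDerivAt_snd
  have hV₀d := h2.fun_mul h1
  rw [hV₀d.fderiv]
  -- derivative of the second component
  have h3 : HasFDerivAt (fun p : ℝ × ℝ => ∫ s in a₂..b₂, w a₁ b₁ a₂ b₂ f (p.1, s))
      ((∫ s in a₂..b₂, w₁ a₁ b₁ a₂ b₂ f (x.1, s)) • ContinuousLinearMap.fst ℝ ℝ ℝ) x :=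
    (hgd x.1 hx1).comp_hasFDerivAt x hasFDerivAt_fst
  have h4 : HasFDerivAt (fun p : ℝ × ℝ => ∫ s in a₂..p.2, ρ s)
      ((ρ x.2) • ContinuousLinearMap.snd ℝ ℝ ℝ) x :=
    (hPd x.2).comp_hasFDerivAt x hasFDerivAt_snd
  have h5 := (hH hab₁ hab₂ hf hx1).fun_sub (h4.fun_mul h3)
  rw [h5.fderiv]
  have hwf : w a₁ b₁ a₂ b₂ f x = f x := w_eq_on hab₁ hxK
  simp only [ContinuousLinearMap.add_apply, ContinuousLinearMap.sub_apply,
    ContinuousLinearMap.coe_smul', Pi.smul_apply, ContinuousLinearMap.coe_fst',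
    ContinuousLinearMap.coe_snd', smul_eq_mul, mul_one, mul_zero, add_zero, zero_add,
    sub_zero]
  rw [← hwf]
  ring

end assembly

end AD3


open Set in
/-- If `u ∈ C¹(J̄; ℝ²)`, then `v = 𝓡ᴶ u ∈ C¹(J̄; 𝕄^{2×2})` and `div v = u` in `J`
(row-wise divergence: `(div v)ⁱ = ∂_{x₁} vⁱ₁ + ∂_{x₂} vⁱ₂`). -/
theorem stmt_3
    (a₁ b₁ a₂ b₂ : ℝ) (hab₁ : a₁ < b₁) (hab₂ : a₂ < b₂)
    (ρ : ℝ → ℝ) (hρ : ContDiff ℝ (⊤ : ℕ∞) ρ) (hρc : HasCompactSupport ρ)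
    (hρsupp : tsupport ρ ⊆ Set.Ioo a₂ b₂)
    (hρint : (∫ s in a₂..b₂, ρ s) = 1)
    (u : ℝ × ℝ → Fin 2 → ℝ)
    (hu : ContDiffOn ℝ 1 u (closure (Set.Ioo a₁ b₁ ×ˢ Set.Ioo a₂ b₂))) :
    ContDiffOn ℝ 1 (Rop a₁ a₂ b₂ ρ u) (closure (Set.Ioo a₁ b₁ ×ˢ Set.Ioo a₂ b₂)) ∧
    ∀ x ∈ Set.Ioo a₁ b₁ ×ˢ Set.Ioo a₂ b₂, ∀ i : Fin 2,
      fderiv ℝ (fun y => Rop a₁ a₂ b₂ ρ u y i 0) x (1, 0) +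
        fderiv ℝ (fun y => Rop a₁ a₂ b₂ ρ u y i 1) x (0, 1) = u x i := by
  have hK : closure (Set.Ioo a₁ b₁ ×ˢ Set.Ioo a₂ b₂) = AD3.K a₁ b₁ a₂ b₂ := by
    rw [closure_prod_eq, closure_Ioo hab₁.ne, closure_Ioo hab₂.ne]
    rfl
  have hρ1 : ContDiff ℝ 1 ρ := hρ.of_le (by simp)
  have hui : ∀ i : Fin 2, ContDiffOn ℝ 1 (fun p => u p i) (AD3.K a₁ b₁ a₂ b₂) := by
    intro i
    have := (ContinuousLinearMap.proj i :
      (Fin 2 → ℝ) →L[ℝ] ℝ).contDiff.comp_contDiffOn (hK ▸ hu)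
    exact this
  have hmain := fun i : Fin 2 => AD3.main hab₁ hab₂ hρ1 (hui i)
  have h0 : ∀ i : Fin 2, (fun y => Rop a₁ a₂ b₂ ρ u y i 0)
      = (fun y : ℝ × ℝ => ρ y.2 * ∫ r in a₁..y.1, (∫ s in a₂..b₂, u (r, s) i)) := by
    intro i
    funext y
    simp [Rop]
  have h1 : ∀ i : Fin 2, (fun y => Rop a₁ a₂ b₂ ρ u y i 1)
      = (fun y : ℝ × ℝ => (∫ s in a₂..y.2, u (y.1, s) i)
        - (∫ s in a₂..y.2, ρ s) * ∫ s in a₂..b₂, u (y.1, s) i) := by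
    intro i
    funext y
    simp [Rop]
  constructor
  · rw [hK]
    apply contDiffOn_pi.2
    intro i
    apply contDiffOn_pi.2
    intro k
    fin_cases k
    · have : (fun x => Rop a₁ a₂ b₂ ρ u x i 0)
          = (fun y : ℝ × ℝ => ρ y.2 * ∫ r in a₁..y.1, (∫ s in a₂..b₂, u (r, s) i)) := h0 i
      rw [show ((⟨0, by norm_num⟩ : Fin 2)) = (0 : Fin 2) from rfl, this]
      exact (hmain i).1
    · have : (fun x => Rop a₁ a₂ b₂ ρ u x i 1)
          = (fun y : ℝ × ℝ => (∫ s in a₂..y.2, u (y.1, s) i)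
            - (∫ s in a₂..y.2, ρ s) * ∫ s in a₂..b₂, u (y.1, s) i) := h1 i
      rw [show ((⟨1, by norm_num⟩ : Fin 2)) = (1 : Fin 2) from rfl, this]
      exact (hmain i).2.1
  · intro x hx i
    rw [h0 i, h1 i]
    exact (hmain i).2.2 x hx
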